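/- Let A be a skew left brace with λ_a(b) = a⁻¹(a∘b) and ρ_b(a) = (λ_a(b))'∘a∘b. Then the pair of actions (λ, ρ) forms a matched pair of groups on ((A,∘),(A,∘)): for all a,b,c ∈ A, λ_a(b∘c) = λ_a(b) ∘ λ_{ρ_b(a)}(c) and ρ_c(a∘b) = ρ_{λ_b(c)}(a) ∘ ρ_c(b). -/

import Mathlib

structure SkewLeftBrace (A : Type*) [Group A] where
  circ : A → A → A
  one' : A
  inv' : A → A
  circ_assoc : ∀ a b c : A, circ (circ a b) c = circ a (circ b c)
  one'_circ : ∀ a : A, circ one' a = a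
  circ_one' : ∀ a : A, circ a one' = a
  inv'_circ : ∀ a : A, circ (inv' a) a = one'
  circ_inv' : ∀ a : A, circ a (inv' a) = one'
  compat : ∀ a b c : A, circ a (b * c) = circ a b * a⁻¹ * circ a c

/-!
Writing `a ∘ b = a · λ_a(b)`, the brace axiom says exactly that each `λ_a` is an automorphism of
`(A,·)`, and associativity of `∘` makes `a ↦ λ_a` an action of `(A,∘)`. The first identity is then
`λ_a(b) · λ_a(λ_b(c)) = λ_a(b ∘ c)`, because `λ_{ρ_b(a)} = λ_{λ_a(b)}' ∘ λ_a ∘ λ_b`; the second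
is a cancellation inside `(A,∘)` after unfolding `ρ`.
-/

namespace SkewLeftBrace

variable {A : Type*} [Group A] (B : SkewLeftBrace A)

def lam (a b : A) : A := a⁻¹ * B.circ a b

/-- `B.rho b a` is `ρ_b(a) = λ_a(b)' ∘ a ∘ b`. -/
def rho (b a : A) : A := B.circ (B.circ (B.inv' (B.lam a b)) a) b

theorem one'_eq_one : B.one' = 1 := by
  have h := B.compat B.one' B.one' B.one'
  rw [B.one'_circ, B.one'_circ] at h
  exact mul_eq_right.mp (by rw [h]; group)

theorem circ_eq_mul_lam (a b : A) : B.circ a b = a * B.lam a b := by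
  rw [lam, mul_inv_cancel_left]

theorem lam_mul (a x y : A) : B.lam a (x * y) = B.lam a x * B.lam a y := by
  simp only [lam, B.compat]
  group

theorem lam_circ (a b c : A) : B.lam (B.circ a b) c = B.lam a (B.lam b c) := by
  rw [lam, B.circ_assoc, B.circ_eq_mul_lam b c, B.compat, lam, lam]
  group

theorem lam_one' (x : A) : B.lam B.one' x = x := by
  rw [lam, B.one'_circ, B.one'_eq_one, inv_one, one_mul]

theorem circ_circ_inv' (x y : A) : B.circ x (B.circ (B.inv' x) y) = y := by
  rw [← B.circ_assoc, B.circ_inv', B.one'_circ]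

theorem lam_lam_inv' (x z : A) : B.lam x (B.lam (B.inv' x) z) = z := by
  rw [← lam_circ, B.circ_inv', lam_one']

theorem lam_apply_circ (a b c : A) :
    B.lam a (B.circ b c) = B.circ (B.lam a b) (B.lam (B.rho b a) c) := by
  rw [rho, lam_circ, lam_circ, circ_eq_mul_lam _ (B.lam a b), lam_lam_inv', ← lam_mul,
    ← circ_eq_mul_lam]

theorem rho_circ (a b c : A) :
    B.rho c (B.circ a b) = B.circ (B.rho (B.lam b c) a) (B.rho c b) := by
  simp only [rho, lam_circ, B.circ_assoc, circ_circ_inv']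

end SkewLeftBrace

/-- `(λ, ρ)` forms a matched pair of the group `(A,∘)` with itself:
`λ_a(b∘c) = λ_a(b) ∘ λ_{ρ_b(a)}(c)` and `ρ_c(a∘b) = ρ_{λ_b(c)}(a) ∘ ρ_c(b)`. -/
theorem skewLeftBrace_matched_pair {A : Type*} [Group A] (B : SkewLeftBrace A)
    (lam rho : A → A → A) (hlam : ∀ a b, lam a b = a⁻¹ * B.circ a b)
    (hrho : ∀ a b, rho b a = B.circ (B.circ (B.inv' (lam a b)) a) b) :
    (∀ a b c, lam a (B.circ b c) = B.circ (lam a b) (lam (rho b a) c)) ∧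
    (∀ a b c, rho c (B.circ a b) = B.circ (rho (lam b c) a) (rho c b)) := by
  obtain rfl : lam = B.lam := funext₂ hlam
  obtain rfl : rho = B.rho := funext₂ fun b a => hrho a b
  exact ⟨B.lam_apply_circ, B.rho_circ⟩
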